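/- In ℝⁿ, a set A is p^λ-convex for some p ∈ A and λ ∈ (0,1] if and only if its image C_p^λ(A) is p^{λ₁}-convex for some λ₁ ∈ (0,1]. -/
import Mathlib


noncomputable def radialContraction {n : ℕ} (p : EuclideanSpace ℝ (Fin n)) (l : ℝ)
    (x : EuclideanSpace ℝ (Fin n)) : EuclideanSpace ℝ (Fin n) :=
  l • x + (1 - l) • p

def PLambdaConvex {n : ℕ} (A : Set (EuclideanSpace ℝ (Fin n)))
    (p : EuclideanSpace ℝ (Fin n)) (l : ℝ) : Prop :=
  ∀ x ∈ A, ∀ y ∈ A, segment ℝ (radialContraction p l x) (radialContraction p l y) ⊆ A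

lemma rc_eq_homothety {n : ℕ} (p : EuclideanSpace ℝ (Fin n)) (l : ℝ)
    (x : EuclideanSpace ℝ (Fin n)) :
    radialContraction p l x = AffineMap.homothety p l x := by
  simp only [radialContraction, AffineMap.homothety_apply, vsub_eq_sub, vadd_eq_add]
  module

lemma rc_image_segment {n : ℕ} (p : EuclideanSpace ℝ (Fin n)) (l : ℝ)
    (x y : EuclideanSpace ℝ (Fin n)) :
    radialContraction p l '' segment ℝ x y
      = segment ℝ (radialContraction p l x) (radialContraction p l y) := by
  have h : radialContraction p l = fun z => AffineMap.homothety p l z := by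
    funext z; exact rc_eq_homothety p l z
  rw [h]
  exact image_segment ℝ (AffineMap.homothety p l) x y

lemma rc_comm {n : ℕ} (p : EuclideanSpace ℝ (Fin n)) (l l₁ : ℝ)
    (x : EuclideanSpace ℝ (Fin n)) :
    radialContraction p l (radialContraction p l₁ x)
      = radialContraction p l₁ (radialContraction p l x) := by
  simp only [radialContraction, smul_add, smul_smul]
  module

lemma rc_inj {n : ℕ} (p : EuclideanSpace ℝ (Fin n)) {l : ℝ} (hl : l ≠ 0) :
    Function.Injective (radialContraction p l) := by
  intro x y h
  simp only [radialContraction] at h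
  exact smul_right_injective _ hl (add_right_cancel h)

theorem pConvex_iff_image_pConvex {n : ℕ} (A : Set (EuclideanSpace ℝ (Fin n)))
    (p : EuclideanSpace ℝ (Fin n)) (hp : p ∈ A) :
    (∃ l ∈ Set.Ioc (0 : ℝ) 1, PLambdaConvex A p l) ↔
      ∃ l ∈ Set.Ioc (0 : ℝ) 1, ∃ l₁ ∈ Set.Ioc (0 : ℝ) 1,
        PLambdaConvex (radialContraction p l '' A) p l₁ := by
  constructor
  · rintro ⟨l, hl, hA⟩
    refine ⟨l, hl, l, hl, ?_⟩
    rintro x ⟨a, ha, rfl⟩ y ⟨b, hb, rfl⟩ z hz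
    have hseg : segment ℝ (radialContraction p l a) (radialContraction p l b) ⊆ A :=
      hA a ha b hb
    have : z ∈ radialContraction p l ''
        segment ℝ (radialContraction p l a) (radialContraction p l b) := by
      rw [rc_image_segment]; exact hz
    obtain ⟨w, hw, rfl⟩ := this
    exact ⟨w, hseg hw, rfl⟩
  · rintro ⟨l, hl, l₁, hl₁, hB⟩
    refine ⟨l₁, hl₁, ?_⟩
    intro a ha b hb z hz
    have hmem : radialContraction p l z ∈
        segment ℝ (radialContraction p l₁ (radialContraction p l a))
          (radialContraction p l₁ (radialContraction p l b)) := by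
      rw [rc_comm p l₁ l a, rc_comm p l₁ l b, ← rc_image_segment]
      exact ⟨z, hz, rfl⟩
    have := hB _ ⟨a, ha, rfl⟩ _ ⟨b, hb, rfl⟩ hmem
    obtain ⟨w, hw, hwz⟩ := this
    have : w = z := rc_inj p (ne_of_gt hl.1) hwz
    exact this ▸ hw
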